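/- Let S be a map from the quantum operations Op(ℂ^m,ℂ^n) to the quantum operations Op(ℂ^{m'},ℂ^{n'}) satisfying S(p·Q + (1−p)·R) = p·S(Q) + (1−p)·S(R) for all quantum operations Q, R and all p ∈ [0,1], and S(0) = 0. Then S extends to a unique ℂ-linear map from the space of all linear maps (from m×m matrices to n×n matrices) to the space of all linear maps (from m'×m' matrices to n'×n' matrices) that agrees with S on the set of quantum operations. -/

import Mathlib

open scoped ComplexOrder Kronecker
open Matrix

noncomputable section

/-- The space of linear maps from `m × m` complex matrices to `n × n` complex matrices. -/
abbrev MatMap (m n : ℕ) := Matrix (Fin m) (Fin m) ℂ →ₗ[ℂ] Matrix (Fin n) (Fin n) ℂ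

/-- The Choi matrix `Choi(Q) = Σ_{i,j} Q(E_{ij}) ⊗ E_{ij}` of a linear map between
matrix spaces. -/
def choi {m n : ℕ} (Q : MatMap m n) : Matrix (Fin n × Fin m) (Fin n × Fin m) ℂ :=
  Matrix.of fun p q => Q (Matrix.single p.2 q.2 1) p.1 q.1

/-- A linear map is completely positive if its Choi matrix is positive semidefinite. -/
def IsCP {m n : ℕ} (Q : MatMap m n) : Prop := (choi Q).PosSemidef

/-- A quantum operation: a completely positive trace-non-increasing linear map. -/
def IsQOp {m n : ℕ} (Q : MatMap m n) : Prop :=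
  IsCP Q ∧ ∀ ρ : Matrix (Fin m) (Fin m) ℂ, ρ.PosSemidef → (Q ρ).trace ≤ ρ.trace

/-- A quantum channel: a completely positive trace-preserving linear map. -/
def IsChannel {m n : ℕ} (Q : MatMap m n) : Prop :=
  IsCP Q ∧ ∀ ρ : Matrix (Fin m) (Fin m) ℂ, (Q ρ).trace = ρ.trace

/-- A density matrix: positive semidefinite with unit trace. -/
def IsDensity {ι : Type*} [Fintype ι] (ρ : Matrix ι ι ℂ) : Prop :=
  ρ.PosSemidef ∧ ρ.trace = 1

/-- A rank-one orthogonal projection `|ψ⟩⟨ψ|` for a unit vector `ψ`. -/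
def IsRankOneProj {d : ℕ} (P : Matrix (Fin d) (Fin d) ℂ) : Prop :=
  ∃ ψ : Fin d → ℂ, star ψ ⬝ᵥ ψ = 1 ∧ P = Matrix.vecMulVec ψ (star ψ)

/-- A state space symmetry: a bijection between the sets of density matrices that
preserves convex combinations. -/
def IsStateSymmetry {ι κ : Type*} [Fintype ι] [Fintype κ]
    (S : Matrix ι ι ℂ → Matrix κ κ ℂ) : Prop :=
  Set.BijOn S {ρ | IsDensity ρ} {ρ | IsDensity ρ} ∧
  ∀ ρ σ : Matrix ι ι ℂ, IsDensity ρ → IsDensity σ → ∀ p : ℝ, 0 ≤ p → p ≤ 1 →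
    S ((p : ℂ) • ρ + ((1 - p : ℝ) : ℂ) • σ) = (p : ℂ) • S ρ + ((1 - p : ℝ) : ℂ) • S σ

/-- An operation space symmetry: a bijection between the sets of quantum operations that
preserves convex combinations and maps the zero map to the zero map. -/
def IsOpSymmetry {m n m' n' : ℕ} (S : MatMap m n → MatMap m' n') : Prop :=
  Set.BijOn S {Q | IsQOp Q} {Q | IsQOp Q} ∧
  (∀ Q R : MatMap m n, IsQOp Q → IsQOp R → ∀ p : ℝ, 0 ≤ p → p ≤ 1 →
    S ((p : ℂ) • Q + ((1 - p : ℝ) : ℂ) • R) = (p : ℂ) • S Q + ((1 - p : ℝ) : ℂ) • S R) ∧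
  S 0 = 0

/-- Transport of a square matrix along an equality of dimensions. -/
def castMat {m n : ℕ} (h : m = n) (A : Matrix (Fin m) (Fin m) ℂ) :
    Matrix (Fin n) (Fin n) ℂ :=
  Matrix.reindex (finCongr h) (finCongr h) A

/-- The unitary channel `ρ ↦ U ρ U†` as a linear map. -/
def adjAction {d : ℕ} (U : Matrix (Fin d) (Fin d) ℂ) : MatMap d d where
  toFun ρ := U * ρ * Uᴴ
  map_add' x y := by simp [Matrix.mul_add, Matrix.add_mul]
  map_smul' c x := by simp [Matrix.mul_smul, Matrix.smul_mul]

/-- The Hilbert–Schmidt adjoint of a linear map between matrix spaces; it is the unique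
linear map satisfying `Tr[A† Q(B)] = Tr[(Q†(A))† B]` for all `A`, `B`. -/
def hsAdjoint {m n : ℕ} (Q : MatMap m n) : MatMap n m where
  toFun A := Matrix.of fun i j => ((Q (Matrix.single i j 1))ᴴ * A).trace
  map_add' A B := by
    ext i j
    simp [Matrix.mul_add, Matrix.trace_add]
  map_smul' c A := by
    ext i j
    simp [Matrix.mul_smul, Matrix.trace_smul]

open scoped Classical in
/-- The positive semidefinite square root (junk value `0` on non-psd inputs). -/
noncomputable def psqrt {d : ℕ} (M : Matrix (Fin d) (Fin d) ℂ) : Matrix (Fin d) (Fin d) ℂ :=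
  if h : M.PosSemidef then
    (h.1.eigenvectorUnitary : Matrix (Fin d) (Fin d) ℂ) *
      Matrix.diagonal ((RCLike.ofReal : ℝ → ℂ) ∘ Real.sqrt ∘ h.1.eigenvalues) *
      (star h.1.eigenvectorUnitary : Matrix (Fin d) (Fin d) ℂ)
  else 0

/-- The fidelity `F(ρ,σ) = (Tr[√(√ρ σ √ρ)])²` of two density matrices. -/
noncomputable def fidelity {d : ℕ} (ρ σ : Matrix (Fin d) (Fin d) ℂ) : ℝ :=
  ((psqrt (psqrt ρ * σ * psqrt ρ)).trace.re) ^ 2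

/-- The double transpose `ρ ↦ [Φ(ρᵀ)]ᵀ` of a linear map between matrix spaces. -/
def doubleTransposeMap {m n : ℕ} (Φ : MatMap m n) : MatMap m n where
  toFun ρ := (Φ ρᵀ)ᵀ
  map_add' x y := by simp
  map_smul' c x := by simp

/-- A time symmetric quantum operation: completely positive, with `Q†(I_n) ≤ I_m`
and `Q(I_m/m) ≤ I_n/n` in the Loewner order. -/
def IsTSOp {m n : ℕ} (Q : MatMap m n) : Prop :=
  IsCP Q ∧ ((1 : Matrix (Fin m) (Fin m) ℂ) - hsAdjoint Q 1).PosSemidef ∧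
    ((n : ℂ)⁻¹ • (1 : Matrix (Fin n) (Fin n) ℂ)
      - Q ((m : ℂ)⁻¹ • (1 : Matrix (Fin m) (Fin m) ℂ))).PosSemidef

/-! On the cone of positive multiples of quantum operations, `T (c • Q) := c • S Q` is well
defined and additive because `S` respects convex combinations and fixes `0`; it extends to a
real-linear map because a linear relation among cone elements equates two nonnegative
combinations of them. Completely positive maps are fixed by the conjugate-linear map
`Φ ↦ (ρ ↦ Φ(ρᴴ)ᴴ)`, and on the fixed points of such a map every real-linear map agrees with a
complex-linear one, obtained by splitting vectors into "real" and "imaginary" parts. The extension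
is unique because quantum operations span all linear maps: `ρ ↦ A ρ Bᴴ` is a polarization of
maps `ρ ↦ A ρ Aᴴ`, which are positive multiples of quantum operations, and the maps `ρ ↦ A ρ Bᴴ`
with matrix units `A`, `B` span. -/

theorem LinearMap.exists_comp_eq_of_ker_le {K U V W : Type*} [DivisionRing K] [AddCommGroup U]
    [Module K U] [AddCommGroup V] [Module K V] [AddCommGroup W] [Module K W]
    (φ : U →ₗ[K] V) (ψ : U →ₗ[K] W) (h : LinearMap.ker φ ≤ LinearMap.ker ψ) :
    ∃ g : V →ₗ[K] W, g ∘ₗ φ = ψ := by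
  obtain ⟨g, hg⟩ := LinearMap.exists_extend
    ((LinearMap.ker φ).liftQ ψ h ∘ₗ φ.quotKerEquivRange.symm.toLinearMap)
  refine ⟨g, LinearMap.ext fun u => ?_⟩
  simpa [LinearMap.quotKerEquivRange_symm_apply_image] using
    LinearMap.congr_fun hg ⟨φ u, LinearMap.mem_range_self φ u⟩

section ConvexExtension

variable {V W : Type*} [AddCommGroup V] [Module ℝ V] [AddCommGroup W] [Module ℝ W]

theorem PointedCone.exists_linearMap_extend (C : PointedCone ℝ V)
    (F : C →ₗ[{c : ℝ // 0 ≤ c}] W) : ∃ g : V →ₗ[ℝ] W, ∀ x : C, g x = F x := by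
  let φ := Finsupp.linearCombination ℝ (fun x : C => (x : V))
  let ψ := Finsupp.linearCombination ℝ (fun x : C => F x)
  suffices hker : LinearMap.ker φ ≤ LinearMap.ker ψ by
    obtain ⟨g, hg⟩ := LinearMap.exists_comp_eq_of_ker_le φ ψ hker
    exact ⟨g, fun x => by simpa [φ, ψ] using LinearMap.congr_fun hg (Finsupp.single x 1)⟩
  intro l hl
  have hparts : ∑ x ∈ l.support, (⟨(l x)⁺, posPart_nonneg _⟩ : {c : ℝ // 0 ≤ c}) • x
      = ∑ x ∈ l.support, (⟨(l x)⁻, negPart_nonneg _⟩ : {c : ℝ // 0 ≤ c}) • x := by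
    apply Subtype.ext
    rw [← sub_eq_zero]
    simp only [Submodule.coe_sum, Submodule.coe_smul, Nonneg.mk_smul, ← Finset.sum_sub_distrib,
      ← sub_smul, posPart_sub_negPart]
    simpa [φ, Finsupp.linearCombination_apply, Finsupp.sum] using hl
  have hF := congrArg F hparts
  simp only [map_sum, map_smul, Nonneg.mk_smul] at hF
  rw [LinearMap.mem_ker, Finsupp.linearCombination_apply, Finsupp.sum]
  calc ∑ x ∈ l.support, l x • F x = ∑ x ∈ l.support, ((l x)⁺ • F x - (l x)⁻ • F x) :=
        Finset.sum_congr rfl fun x _ => by rw [← sub_smul, posPart_sub_negPart]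
    _ = 0 := by rw [Finset.sum_sub_distrib, hF, sub_self]

def ConvexLinearOn (K : Set V) (f : V → W) : Prop :=
  ∀ x ∈ K, ∀ y ∈ K, ∀ a b : ℝ, 0 ≤ a → 0 ≤ b → a + b = 1 → f (a • x + b • y) = a • f x + b • f y

namespace ConvexLinearOn

variable {K : Set V} {f : V → W}

theorem map_smul (hf : ConvexLinearOn K f) (h0 : (0 : V) ∈ K) (hf0 : f 0 = 0) {y : V}
    (hy : y ∈ K) {t : ℝ} (ht0 : 0 ≤ t) (ht1 : t ≤ 1) : f (t • y) = t • f y := by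
  simpa [hf0] using hf y hy 0 h0 t (1 - t) ht0 (by linarith) (by ring)

theorem smul_map_eq_of_smul_eq (hf : ConvexLinearOn K f) (h0 : (0 : V) ∈ K) (hf0 : f 0 = 0)
    {c d : ℝ} {y z : V} (hc : 0 < c) (hd : 0 < d) (hy : y ∈ K) (hz : z ∈ K)
    (h : c • y = d • z) : c • f y = d • f z := by
  wlog hcd : c ≤ d generalizing c d y z
  · exact (this hd hc hz hy h.symm (le_of_not_ge hcd)).symm
  have hzy : z = (c / d) • y := by
    rw [div_eq_inv_mul, mul_smul, h, inv_smul_smul₀ hd.ne']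
  rw [hzy, hf.map_smul h0 hf0 hy (by positivity) ((div_le_one hd).2 hcd), smul_smul,
    mul_div_cancel₀ _ hd.ne']

theorem exists_linearMap_hull (hf : ConvexLinearOn K f) (hK : Convex ℝ K) (h0 : (0 : V) ∈ K)
    (hf0 : f 0 = 0) :
    ∃ F : (ConvexCone.hull ℝ K).toPointedCone (ConvexCone.subset_hull h0)
      →ₗ[{c : ℝ // 0 ≤ c}] W, ∀ y (hy : y ∈ K), F ⟨y, ConvexCone.subset_hull hy⟩ = f y := by
  set C := (ConvexCone.hull ℝ K).toPointedCone (ConvexCone.subset_hull h0)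
  have hrep : ∀ v : C, ∃ c : ℝ, 0 < c ∧ ∃ y ∈ K, c • y = (v : V) :=
    fun v => (ConvexCone.mem_hull_of_convex hK).1 v.2
  choose c hc y hy hcy using hrep
  have hF : ∀ (v : C) (d : ℝ) (z : V), 0 < d → z ∈ K → d • z = (v : V) →
      c v • f (y v) = d • f z := fun v d z hd hz hv =>
    hf.smul_map_eq_of_smul_eq h0 hf0 (hc v) hd (hy v) hz ((hcy v).trans hv.symm)
  refine ⟨{ toFun := fun v => c v • f (y v), map_add' := fun v w => ?_, map_smul' := ?_ },
    fun z hz => (hF _ 1 z one_pos hz (one_smul ℝ z)).trans (one_smul ℝ _)⟩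
  · have hcv := hc v
    have hcw := hc w
    have hcd : 0 < c v + c w := add_pos hcv hcw
    have hsum : c v / (c v + c w) + c w / (c v + c w) = 1 := by
      rw [← add_div, div_self hcd.ne']
    have hvw : (c v + c w) • ((c v / (c v + c w)) • y v + (c w / (c v + c w)) • y w)
        = ((v + w : C) : V) := by
      rw [smul_add, smul_smul, smul_smul, mul_div_cancel₀ _ hcd.ne', mul_div_cancel₀ _ hcd.ne',
        hcy, hcy, Submodule.coe_add]
    rw [hF _ _ _ hcd (hK (hy v) (hy w) (by positivity) (by positivity) hsum) hvw,
      hf _ (hy v) _ (hy w) _ _ (by positivity) (by positivity) hsum, smul_add, smul_smul,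
      smul_smul, mul_div_cancel₀ _ hcd.ne', mul_div_cancel₀ _ hcd.ne']
  · rintro ⟨t, ht⟩ v
    -- `t • v = (1 + t c) • (s • y)` with `s = t c / (1 + t c) ∈ [0, 1]`, which also covers `t = 0`.
    have hcv := hc v
    have h1 : 0 < 1 + t * c v := by positivity
    have hs0 : 0 ≤ t * c v / (1 + t * c v) := by positivity
    have hs1 : t * c v / (1 + t * c v) ≤ 1 := (div_le_one h1).2 (by linarith)
    have htv : (1 + t * c v) • ((t * c v / (1 + t * c v)) • y v)
        = ((⟨t, ht⟩ : {c : ℝ // 0 ≤ c}) • v : C) := by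
      rw [smul_smul, mul_div_cancel₀ _ h1.ne', Submodule.coe_smul, Nonneg.mk_smul, ← hcy,
        smul_smul]
    simp only [RingHom.id_apply, Nonneg.mk_smul]
    rw [hF _ _ _ h1 (hK.smul_mem_of_zero_mem h0 (hy v) ⟨hs0, hs1⟩) htv,
      hf.map_smul h0 hf0 (hy v) hs0 hs1, smul_smul, mul_div_cancel₀ _ h1.ne', mul_smul]

theorem exists_linearMap_eqOn (hf : ConvexLinearOn K f) (hK : Convex ℝ K) (h0 : (0 : V) ∈ K)
    (hf0 : f 0 = 0) : ∃ g : V →ₗ[ℝ] W, Set.EqOn g f K := by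
  obtain ⟨F, hF⟩ := hf.exists_linearMap_hull hK h0 hf0
  obtain ⟨g, hg⟩ := PointedCone.exists_linearMap_extend _ F
  exact ⟨g, fun y hy => (hg _).trans (hF y hy)⟩

end ConvexLinearOn

end ConvexExtension

open Complex in
theorem exists_linearMap_eqOn_fixedPoints {V W : Type*} [AddCommGroup V] [Module ℂ V]
    [Module ℝ V] [IsScalarTower ℝ ℂ V] [AddCommGroup W] [Module ℂ W] [Module ℝ W]
    [IsScalarTower ℝ ℂ W] (σ : V →ₗ⋆[ℂ] V) (g : V →ₗ[ℝ] W) :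
    ∃ L : V →ₗ[ℂ] W, Set.EqOn L g (Function.fixedPoints σ) := by
  -- `L x = g (re x) + I • g (im x)` with `re x = (x + σ x) / 2` and `im x = (x - σ x) / (2 I)`.
  obtain ⟨L, hL⟩ : ∃ L : V → W, ∀ x, L x = (2⁻¹ : ℂ) • (g (x + σ x) - I • g (I • (x - σ x))) :=
    ⟨_, fun _ => rfl⟩
  have hg : ∀ (r : ℝ) v, g ((r : ℂ) • v) = (r : ℂ) • g v := fun r v => by
    show g (algebraMap ℝ ℂ r • v) = algebraMap ℝ ℂ r • g v
    rw [algebraMap_smul, algebraMap_smul, map_smul]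
  have hadd : ∀ x y, L (x + y) = L x + L y := fun x y => by
    simp only [hL, map_add, add_sub_add_comm, smul_add]
    module
  have hreal : ∀ (r : ℝ) x, L ((r : ℂ) • x) = (r : ℂ) • L x := fun r x => by
    simp only [hL, map_smulₛₗ, conj_ofReal, ← smul_add, ← smul_sub, smul_comm I (r : ℂ), hg]
    module
  have hI : ∀ x, L (I • x) = I • L x := fun x => by
    have h1 : I • x + σ (I • x) = I • (x - σ x) := by
      rw [map_smulₛₗ, conj_I]; module
    have h2 : I • (I • x - σ (I • x)) = -(x + σ x) := by
      rw [map_smulₛₗ, conj_I, smul_sub, smul_smul, smul_smul, mul_neg, I_mul_I, neg_neg,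
        neg_one_smul, one_smul]
      abel
    have h3 : ∀ a b : W, I • (b - I • a) = a + I • b := fun a b => by
      rw [smul_sub, smul_smul, I_mul_I, neg_one_smul, sub_neg_eq_add, add_comm]
    rw [hL, hL, h1, h2, map_neg, smul_neg, sub_neg_eq_add, smul_comm I, h3]
  refine ⟨{ toFun := L, map_add' := hadd, map_smul' := fun z x => ?_ },
    fun x (hx : σ x = x) => ?_⟩
  · have hz : z • x = (z.re : ℂ) • x + (z.im : ℂ) • I • x := by
      rw [smul_smul, ← add_smul, re_add_im]
    simp only [RingHom.id_apply]
    rw [hz, hadd, hreal, hreal, hI, smul_smul, ← add_smul, re_add_im]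
  · simp only [LinearMap.coe_mk, AddHom.coe_mk, hL, hx, sub_self, smul_zero, map_zero, sub_zero]
    rw [map_add, ← two_smul ℂ (g x), smul_smul, inv_mul_cancel₀ two_ne_zero, one_smul]

section QuantumOperations

variable {m n : ℕ}

def conjMap : MatMap m n →ₗ⋆[ℂ] MatMap m n where
  toFun Φ :=
    { toFun := fun ρ => (Φ ρᴴ)ᴴ
      map_add' := fun ρ σ => by simp only [conjTranspose_add, map_add]
      map_smul' := fun z ρ => by simp only [conjTranspose_smul, map_smul, star_star]; rfl }
  map_add' Φ Ψ := LinearMap.ext fun ρ => conjTranspose_add _ _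
  map_smul' z Φ := LinearMap.ext fun ρ => conjTranspose_smul z (Φ ρᴴ)

theorem conjMap_apply (Φ : MatMap m n) (ρ : Matrix (Fin m) (Fin m) ℂ) :
    conjMap Φ ρ = (Φ ρᴴ)ᴴ := rfl

theorem IsCP.conjTranspose_map_single {Q : MatMap m n} (hQ : IsCP Q) (i j : Fin m) :
    (Q (single j i 1))ᴴ = Q (single i j 1) := by
  ext p q
  simpa [choi] using congrFun (congrFun hQ.isHermitian (p, i)) (q, j)

theorem IsCP.conjMap_eq {Q : MatMap m n} (hQ : IsCP Q) : conjMap Q = Q := by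
  refine Matrix.ext_linearMap (R := ℂ) fun i j => LinearMap.ext_ring ?_
  simp [conjMap_apply, hQ.conjTranspose_map_single]

theorem isQOp_zero : IsQOp (0 : MatMap m n) :=
  ⟨by rw [IsCP, show choi (0 : MatMap m n) = 0 by ext; simp [choi]]; exact .zero,
    fun ρ hρ => by simpa using hρ.trace_nonneg⟩

theorem convex_setOf_isQOp : Convex ℝ {Q : MatMap m n | IsQOp Q} := by
  intro Q hQ R hR a b ha hb hab
  refine ⟨?_, fun ρ hρ => ?_⟩
  · have : choi (a • Q + b • R) = a • choi Q + b • choi R := by ext; simp [choi]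
    rw [IsCP, this]
    exact (hQ.1.smul ha).add (hR.1.smul hb)
  · simp only [LinearMap.add_apply, LinearMap.smul_apply, trace_add, trace_smul]
    calc a • (Q ρ).trace + b • (R ρ).trace ≤ a • ρ.trace + b • ρ.trace :=
          add_le_add (smul_le_smul_of_nonneg_left (hQ.2 ρ hρ) ha)
            (smul_le_smul_of_nonneg_left (hR.2 ρ hρ) hb)
      _ = ρ.trace := by rw [← add_smul, hab, one_smul]

def sandwich (A B : Matrix (Fin n) (Fin m) ℂ) : MatMap m n where
  toFun ρ := A * ρ * Bᴴ
  map_add' x y := by rw [Matrix.mul_add, Matrix.add_mul]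
  map_smul' c x := by rw [Matrix.mul_smul, Matrix.smul_mul]; rfl

theorem sandwich_apply (A B : Matrix (Fin n) (Fin m) ℂ) (ρ : Matrix (Fin m) (Fin m) ℂ) :
    sandwich A B ρ = A * ρ * Bᴴ := rfl

theorem isCP_sandwich_self (A : Matrix (Fin n) (Fin m) ℂ) : IsCP (sandwich A A) := by
  have : choi (sandwich A A) = vecMulVec (fun x => A x.1 x.2) (star fun x => A x.1 x.2) := by
    ext p q
    simp [choi, sandwich_apply, vecMulVec_apply, mul_apply, single, ite_and, Finset.sum_ite_eq]
  rw [IsCP, this]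
  exact posSemidef_vecMulVec_self_star _

section Frobenius

open scoped Matrix.Norms.Frobenius

theorem Matrix.trace_mul_conjTranspose_self_eq_frobenius_norm_sq {ι κ : Type*} [Fintype ι]
    [Fintype κ] (X : Matrix ι κ ℂ) : (X * Xᴴ).trace = ((‖X‖ ^ 2 : ℝ) : ℂ) := by
  rw [frobenius_norm_def, ← Real.sqrt_eq_rpow, Real.sq_sqrt (by positivity)]
  simp [trace, mul_apply, Complex.mul_conj, Complex.normSq_eq_norm_sq]

theorem Matrix.trace_mul_mul_conjTranspose_le {ι κ : Type*} [Fintype ι] [Fintype κ]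
    [DecidableEq κ] (A : Matrix ι κ ℂ) {ρ : Matrix κ κ ℂ} (hρ : ρ.PosSemidef) :
    (A * ρ * Aᴴ).trace ≤ ((‖A‖ ^ 2 : ℝ) : ℂ) * ρ.trace := by
  obtain ⟨B, rfl⟩ : ∃ B : Matrix κ κ ℂ, ρ = Bᴴ * B := by
    open scoped MatrixOrder in
    exact CStarAlgebra.nonneg_iff_eq_star_mul_self.mp hρ.nonneg
  have hAB : A * (Bᴴ * B) * Aᴴ = (A * Bᴴ) * (A * Bᴴ)ᴴ := by
    simp only [conjTranspose_mul, conjTranspose_conjTranspose, Matrix.mul_assoc]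
  have hB : Bᴴ * B = Bᴴ * Bᴴᴴ := by rw [conjTranspose_conjTranspose]
  rw [hAB, hB, trace_mul_conjTranspose_self_eq_frobenius_norm_sq,
    trace_mul_conjTranspose_self_eq_frobenius_norm_sq, ← Complex.ofReal_mul, Complex.real_le_real,
    ← mul_pow]
  gcongr
  simpa using frobenius_norm_mul A Bᴴ

theorem exists_pos_smul_sandwich_self_isQOp (A : Matrix (Fin n) (Fin m) ℂ) :
    ∃ c : ℝ, 0 < c ∧ IsQOp ((c : ℂ) • sandwich A A) := by
  set c : ℝ := (‖A‖ ^ 2 + 1)⁻¹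
  have hc : 0 < c := by positivity
  refine ⟨c, hc, ?_, fun ρ hρ => ?_⟩
  · have : choi ((c : ℂ) • sandwich A A) = (c : ℂ) • choi (sandwich A A) := by ext; simp [choi]
    rw [IsCP, this]
    exact (isCP_sandwich_self A).smul (Complex.zero_le_real.2 hc.le)
  · have hcA : c * ‖A‖ ^ 2 ≤ 1 := by
      rw [inv_mul_le_iff₀ (by positivity)]; linarith
    calc (((c : ℂ) • sandwich A A) ρ).trace = (c : ℂ) * (A * ρ * Aᴴ).trace := by
          rw [LinearMap.smul_apply, sandwich_apply, trace_smul, smul_eq_mul]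
      _ ≤ (c : ℂ) * (((‖A‖ ^ 2 : ℝ) : ℂ) * ρ.trace) :=
          mul_le_mul_of_nonneg_left (trace_mul_mul_conjTranspose_le A hρ)
            (Complex.zero_le_real.2 hc.le)
      _ = ((c * ‖A‖ ^ 2 : ℝ) : ℂ) * ρ.trace := by push_cast; ring
      _ ≤ 1 * ρ.trace := mul_le_mul_of_nonneg_right (by exact_mod_cast hcA) hρ.trace_nonneg
      _ = ρ.trace := one_mul _

end Frobenius

theorem sandwich_self_mem_span (A : Matrix (Fin n) (Fin m) ℂ) :
    sandwich A A ∈ Submodule.span ℂ {Q : MatMap m n | IsQOp Q} := by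
  obtain ⟨c, hc, hQ⟩ := exists_pos_smul_sandwich_self_isQOp A
  rw [← inv_smul_smul₀ (Complex.ofReal_ne_zero.2 hc.ne') (sandwich A A)]
  exact Submodule.smul_mem _ _ (Submodule.subset_span hQ)

theorem sandwich_eq_polarization (A B : Matrix (Fin n) (Fin m) ℂ) :
    sandwich A B = (2⁻¹ : ℂ) • (sandwich (A + B) (A + B) - sandwich A A - sandwich B B)
      + (2⁻¹ * Complex.I : ℂ) • (sandwich (A + Complex.I • B) (A + Complex.I • B)
        - sandwich A A - sandwich B B) := by
  ext1 ρ
  simp only [LinearMap.add_apply, LinearMap.smul_apply, LinearMap.sub_apply, sandwich_apply,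
    conjTranspose_add, conjTranspose_smul, Matrix.add_mul, Matrix.mul_add, Matrix.smul_mul,
    Matrix.mul_smul, Complex.star_def, Complex.conj_I]
  match_scalars <;> norm_num [Complex.ext_iff]

theorem sandwich_mem_span (A B : Matrix (Fin n) (Fin m) ℂ) :
    sandwich A B ∈ Submodule.span ℂ {Q : MatMap m n | IsQOp Q} := by
  rw [sandwich_eq_polarization]
  refine add_mem (Submodule.smul_mem _ _ ?_) (Submodule.smul_mem _ _ ?_) <;>
    exact sub_mem (sub_mem (sandwich_self_mem_span _) (sandwich_self_mem_span _))
      (sandwich_self_mem_span _)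

theorem sandwich_single_apply (p q : Fin n) (i j : Fin m) (ρ : Matrix (Fin m) (Fin m) ℂ) :
    sandwich (single p i 1) (single q j 1) ρ = single p q (ρ i j) := by
  simp [sandwich_apply, conjTranspose_single]

theorem eq_sum_sandwich_single (Φ : MatMap m n) :
    Φ = ∑ i, ∑ j, ∑ p, ∑ q, Φ (single i j 1) p q • sandwich (single p i 1) (single q j 1) := by
  ext1 ρ
  conv_lhs => rw [matrix_eq_sum_single ρ]
  simp only [map_sum, LinearMap.sum_apply, LinearMap.smul_apply, sandwich_single_apply]
  refine Finset.sum_congr rfl fun i _ => Finset.sum_congr rfl fun j _ => ?_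
  rw [show single i j (ρ i j) = ρ i j • single i j 1 by rw [smul_single, smul_eq_mul, mul_one],
    map_smul]
  conv_lhs => rw [matrix_eq_sum_single (Φ (single i j 1))]
  simp only [Finset.smul_sum, smul_single, smul_eq_mul, mul_comm]

theorem span_setOf_isQOp : Submodule.span ℂ {Q : MatMap m n | IsQOp Q} = ⊤ := by
  refine eq_top_iff.2 fun Φ _ => ?_
  rw [eq_sum_sandwich_single Φ]
  exact Submodule.sum_mem _ fun i _ => Submodule.sum_mem _ fun j _ =>
    Submodule.sum_mem _ fun p _ => Submodule.sum_mem _ fun q _ =>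
      Submodule.smul_mem _ _ (sandwich_mem_span _ _)

end QuantumOperations

theorem unique_linear_extension_general (m n m' n' : ℕ)
    (S : MatMap m n → MatMap m' n')
    (hconv : ∀ Q R : MatMap m n, IsQOp Q → IsQOp R → ∀ p : ℝ, 0 ≤ p → p ≤ 1 →
      S ((p : ℂ) • Q + ((1 - p : ℝ) : ℂ) • R)
        = (p : ℂ) • S Q + ((1 - p : ℝ) : ℂ) • S R)
    (hzero : S 0 = 0) :
    ∃! L : MatMap m n →ₗ[ℂ] MatMap m' n', ∀ Q : MatMap m n, IsQOp Q → L Q = S Q := by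
  have hS : ConvexLinearOn {Q : MatMap m n | IsQOp Q} S := by
    intro Q hQ R hR a b ha hb hab
    obtain rfl : b = 1 - a := by linarith
    simp only [← Complex.coe_smul]
    exact hconv Q R hQ hR a ha (by linarith)
  obtain ⟨g, hg⟩ := hS.exists_linearMap_eqOn convex_setOf_isQOp isQOp_zero hzero
  obtain ⟨L, hL⟩ := exists_linearMap_eqOn_fixedPoints conjMap g
  have hLS : ∀ Q : MatMap m n, IsQOp Q → L Q = S Q :=
    fun Q hQ => (hL hQ.1.conjMap_eq).trans (hg hQ)
  exact ⟨L, hLS, fun L' hL' =>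
    LinearMap.ext_on span_setOf_isQOp fun Q hQ => (hL' Q hQ).trans (hLS Q hQ).symm⟩

/-- A map of quantum operations that preserves convex combinations and the zero map
extends to a unique `ℂ`-linear map between the spaces of all linear maps. -/
theorem unique_linear_extension (m n m' n' : ℕ)
    (S : MatMap m n → MatMap m' n')
    (hmap : ∀ Q : MatMap m n, IsQOp Q → IsQOp (S Q))
    (hconv : ∀ Q R : MatMap m n, IsQOp Q → IsQOp R → ∀ p : ℝ, 0 ≤ p → p ≤ 1 →
      S ((p : ℂ) • Q + ((1 - p : ℝ) : ℂ) • R)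
        = (p : ℂ) • S Q + ((1 - p : ℝ) : ℂ) • S R)
    (hzero : S 0 = 0) :
    ∃! L : MatMap m n →ₗ[ℂ] MatMap m' n', ∀ Q : MatMap m n, IsQOp Q → L Q = S Q :=
  unique_linear_extension_general m n m' n' S hconv hzero
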